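/- arXiv:1402.3955 — 4 statements merged into one kernel-verified Lean document; each statement's English description precedes it below -/
import Mathlib

section
/- For every function h in H^1(ℝ) one has the interpolation inequality ‖h‖_{L^∞(ℝ)} ≤ (9/16)^{1/3} (∫_ℝ |h(x)| dx)^{1/3} (∫_ℝ h'(x)^2 dx)^{1/3}. -/
/-!
With `G = √|h| * h = sign h * |h| ^ (3/2)` one has `G' = (3/2) √|h| h'`, which is integrable by
Cauchy–Schwarz. Hence `G` has limits at `±∞`; they vanish because `|h| = |G| ^ (2/3)` is
integrable. Integrating `G'` from either end gives
`2 |h x| ^ (3/2) ≤ ∫ |G'| ≤ (3/2) (∫ |h|) ^ (1/2) (∫ h' ^ 2) ^ (1/2)`, and squaring yields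
`|h x| ^ 3 ≤ (9/16) (∫ |h|) (∫ h' ^ 2)`.
-/

open MeasureTheory Filter Set Topology

theorem hasDerivAt_sqrt_abs_mul_self (t : ℝ) :
    HasDerivAt (fun s ↦ √|s| * s) (3 / 2 * √|t|) t := by
  rcases eq_or_ne t 0 with rfl | ht
  · rw [hasDerivAt_iff_tendsto_slope_zero]
    have : Tendsto (fun s : ℝ ↦ √|s|) (𝓝[≠] 0) (𝓝 0) := by
      simpa using ((continuous_abs.sqrt).tendsto 0).mono_left nhdsWithin_le_nhds
    refine (this.congr' ?_).trans (by simp)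
    filter_upwards [self_mem_nhdsWithin] with s (hs : s ≠ 0)
    simp [mul_inv_cancel_right₀ hs, mul_comm s⁻¹]
  · have hpos : 0 < √|t| := Real.sqrt_pos.2 (abs_pos.2 ht)
    refine (((hasDerivAt_abs ht).sqrt (abs_ne_zero.2 ht)).mul (hasDerivAt_id' t)).congr_deriv ?_
    field_simp
    rw [sign_mul_self, Real.sq_sqrt (abs_nonneg t)]
    ring

theorem two_mul_norm_le_integral_norm_deriv {E : Type*} [NormedAddCommGroup E] [NormedSpace ℝ E]
    [CompleteSpace E] {f f' : ℝ → E} (hf : ∀ x, HasDerivAt f (f' x) x) (hf' : Integrable f')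
    (hbot : Tendsto f atBot (𝓝 0)) (htop : Tendsto f atTop (𝓝 0)) (x : ℝ) :
    2 * ‖f x‖ ≤ ∫ t, ‖f' t‖ := by
  have hIic : ∫ t in Iic x, f' t = f x := by
    simpa using integral_Iic_of_hasDerivAt_of_tendsto' (fun t _ ↦ hf t) hf'.integrableOn hbot
  have hIoi : ∫ t in Ioi x, f' t = -f x := by
    simpa using integral_Ioi_of_hasDerivAt_of_tendsto' (fun t _ ↦ hf t) hf'.integrableOn htop
  calc 2 * ‖f x‖ = ‖∫ t in Iic x, f' t‖ + ‖∫ t in Ioi x, f' t‖ := by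
        rw [hIic, hIoi, norm_neg]; ring
    _ ≤ (∫ t in Iic x, ‖f' t‖) + ∫ t in Ioi x, ‖f' t‖ :=
        add_le_add (norm_integral_le_integral_norm _) (norm_integral_le_integral_norm _)
    _ = ∫ t, ‖f' t‖ :=
        intervalIntegral.integral_Iic_add_Ioi hf'.norm.integrableOn hf'.norm.integrableOn

theorem volume_eq_top_of_mem_atTop {s : Set ℝ} (hs : s ∈ atTop) : volume s = ⊤ := by
  obtain ⟨a, ha⟩ := mem_atTop_sets.1 hs
  exact top_le_iff.1 (Real.volume_Ici (a := a) ▸ measure_mono ha)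

theorem volume_eq_top_of_mem_atBot {s : Set ℝ} (hs : s ∈ atBot) : volume s = ⊤ := by
  obtain ⟨a, ha⟩ := mem_atBot_sets.1 hs
  exact top_le_iff.1 (Real.volume_Iic (a := a) ▸ measure_mono ha)

theorem abs_sqrt_abs_mul_self_rpow (t : ℝ) : |√|t| * t| ^ (2 / 3 : ℝ) = |t| := by
  have hcube : √|t| * |t| = √|t| ^ (3 : ℝ) := by
    rw [show (3 : ℝ) = (3 : ℕ) by norm_num, Real.rpow_natCast]
    linear_combination (-√|t|) * Real.sq_sqrt (abs_nonneg t)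
  rw [abs_mul, abs_of_nonneg (Real.sqrt_nonneg _), hcube, ← Real.rpow_mul (Real.sqrt_nonneg _)]
  norm_num

theorem eq_zero_of_tendsto_sqrt_abs_mul_self {h : ℝ → ℝ} (hint : Integrable h) {l : Filter ℝ}
    (hl : ∀ s ∈ l, volume s = ⊤) {c : ℝ} (hc : Tendsto (fun x ↦ √|h x| * h x) l (𝓝 c)) :
    c = 0 := by
  have hlim : Tendsto (fun x ↦ |h x|) l (𝓝 (|c| ^ (2 / 3 : ℝ))) := by
    simpa only [abs_sqrt_abs_mul_self_rpow] using
      hc.abs.rpow_const (Or.inr (by norm_num : (0 : ℝ) ≤ 2 / 3))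
  have := hint.abs.integrableAtFilter l |>.eq_zero_of_tendsto hl hlim
  simpa using this

section CauchySchwarz

variable {α : Type*} [MeasurableSpace α] {μ : Measure α} {f g : α → ℝ}

theorem MeasureTheory.Integrable.memLp_two_sqrt_abs (hf : Integrable f μ) :
    MemLp (fun x ↦ √|f x|) 2 μ := by
  refine (memLp_two_iff_integrable_sq
    (continuous_abs.sqrt.comp_aestronglyMeasurable hf.aestronglyMeasurable)).2 ?_
  simpa only [Real.sq_sqrt (abs_nonneg _)] using hf.abs

theorem MeasureTheory.Integrable.sqrt_abs_mul (hf : Integrable f μ) (hg : MemLp g 2 μ) :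
    Integrable (fun x ↦ √|f x| * g x) μ :=
  hf.memLp_two_sqrt_abs.integrable_mul hg

theorem integral_sqrt_abs_mul_abs_le (hf : Integrable f μ) (hg : MemLp g 2 μ) :
    ∫ x, √|f x| * |g x| ∂μ ≤ √(∫ x, |f x| ∂μ) * √(∫ x, g x ^ 2 ∂μ) := by
  have := integral_mul_le_Lp_mul_Lq_of_nonneg Real.HolderConjugate.two_two
    (.of_forall fun x ↦ Real.sqrt_nonneg (|f x|)) (.of_forall fun x ↦ abs_nonneg (g x))
    (by simpa using hf.memLp_two_sqrt_abs) (by simpa [Pi.abs_def] using hg.abs)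
  simpa only [Real.rpow_two, Real.sq_sqrt (abs_nonneg _), sq_abs, ← Real.sqrt_eq_rpow] using this

end CauchySchwarz

theorem le_cbrt_of_sqrt_mul_self_le {M A B c : ℝ} (hM : 0 ≤ M) (hA : 0 ≤ A) (hB : 0 ≤ B)
    (h : √M * M ≤ c * √A * √B) :
    M ≤ (c ^ 2) ^ (1 / 3 : ℝ) * A ^ (1 / 3 : ℝ) * B ^ (1 / 3 : ℝ) := by
  have hcube : M ^ 3 ≤ c ^ 2 * A * B := by
    have := pow_le_pow_left₀ (by positivity) h 2
    rwa [mul_pow, mul_pow, mul_pow, Real.sq_sqrt hM, Real.sq_sqrt hA, Real.sq_sqrt hB,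
      ← pow_succ'] at this
  rw [← Real.mul_rpow (by positivity) hA, ← Real.mul_rpow (by positivity) hB]
  calc M = (M ^ 3) ^ (1 / 3 : ℝ) := by
        rw [← Real.rpow_natCast, ← Real.rpow_mul hM]; norm_num
    _ ≤ _ := Real.rpow_le_rpow (by positivity) hcube (by norm_num)

section SqrtAbsMulSelf

variable {h h' : ℝ → ℝ}

theorem HasDerivAt.sqrt_abs_mul_self {x : ℝ} (hd : HasDerivAt h (h' x) x) :
    HasDerivAt (fun y ↦ √|h y| * h y) (3 / 2 * (√|h x| * h' x)) x := by
  simpa only [mul_assoc, Function.comp_def] using (hasDerivAt_sqrt_abs_mul_self (h x)).comp x hd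

theorem tendsto_sqrt_abs_mul_self_atTop (hderiv : ∀ x, HasDerivAt h (h' x) x)
    (hmem' : MemLp h' 2) (hint : Integrable h) :
    Tendsto (fun y ↦ √|h y| * h y) atTop (𝓝 0) := by
  have hlim := tendsto_limUnder_of_hasDerivAt_of_integrableOn_Ioi (a := 0)
    (fun y _ ↦ (hderiv y).sqrt_abs_mul_self)
    ((hint.sqrt_abs_mul hmem').const_mul _).integrableOn
  rwa [eq_zero_of_tendsto_sqrt_abs_mul_self hint (fun _ ↦ volume_eq_top_of_mem_atTop) hlim]
    at hlim

theorem tendsto_sqrt_abs_mul_self_atBot (hderiv : ∀ x, HasDerivAt h (h' x) x)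
    (hmem' : MemLp h' 2) (hint : Integrable h) :
    Tendsto (fun y ↦ √|h y| * h y) atBot (𝓝 0) := by
  have hlim := tendsto_limUnder_of_hasDerivAt_of_integrableOn_Iic (a := 0)
    (fun y _ ↦ (hderiv y).sqrt_abs_mul_self)
    ((hint.sqrt_abs_mul hmem').const_mul _).integrableOn
  rwa [eq_zero_of_tendsto_sqrt_abs_mul_self hint (fun _ ↦ volume_eq_top_of_mem_atBot) hlim]
    at hlim

theorem sqrt_abs_mul_abs_le (hderiv : ∀ x, HasDerivAt h (h' x) x) (hmem' : MemLp h' 2)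
    (hint : Integrable h) (x : ℝ) :
    √|h x| * |h x| ≤ 3 / 4 * √(∫ y, |h y|) * √(∫ y, h' y ^ 2) := by
  have h2 := two_mul_norm_le_integral_norm_deriv (fun y ↦ (hderiv y).sqrt_abs_mul_self)
    ((hint.sqrt_abs_mul hmem').const_mul _)
    (tendsto_sqrt_abs_mul_self_atBot hderiv hmem' hint)
    (tendsto_sqrt_abs_mul_self_atTop hderiv hmem' hint) x
  simp only [norm_mul, Real.norm_eq_abs, abs_of_nonneg (Real.sqrt_nonneg _),
    integral_const_mul] at h2
  linarith [integral_sqrt_abs_mul_abs_le hint hmem']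

end SqrtAbsMulSelf

theorem interpolation_inequality_general
    (h h' : ℝ → ℝ)
    (hderiv : ∀ x, HasDerivAt h (h' x) x)
    (hmem' : MemLp h' 2 (volume : Measure ℝ))
    (hint : Integrable h) :
    ∀ x : ℝ, |h x| ≤
      ((9 : ℝ)/16) ^ ((1:ℝ)/3) * (∫ y, |h y|) ^ ((1:ℝ)/3) *
        (∫ y, (h' y) ^ 2) ^ ((1:ℝ)/3) := by
  intro x
  have := le_cbrt_of_sqrt_mul_self_le (abs_nonneg _) (integral_nonneg fun y ↦ abs_nonneg (h y))
    (integral_nonneg fun y ↦ sq_nonneg (h' y)) (sqrt_abs_mul_abs_le hderiv hmem' hint x)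
  convert this using 3
  norm_num

/-- **Interpolation inequality.** For every `h ∈ H¹(ℝ)` (encoded as a differentiable
function with derivative `h'`, both square integrable, and `h` integrable),
`‖h‖_{L^∞} ≤ (9/16)^{1/3} (∫ |h|)^{1/3} (∫ h'²)^{1/3}`.  Since `h` is continuous,
the `L^∞` norm is the pointwise supremum of `|h|`. -/
theorem interpolation_inequality
    (h h' : ℝ → ℝ)
    (hderiv : ∀ x, HasDerivAt h (h' x) x)
    (hmem : MemLp h 2 (volume : Measure ℝ))
    (hmem' : MemLp h' 2 (volume : Measure ℝ))
    (hint : Integrable h) :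
    ∀ x : ℝ, |h x| ≤
      ((9 : ℝ)/16) ^ ((1:ℝ)/3) * (∫ y, |h y|) ^ ((1:ℝ)/3) *
        (∫ y, (h' y) ^ 2) ^ ((1:ℝ)/3) :=
  interpolation_inequality_general h h' hderiv hmem' hint
end

section
/- Among all even, nonnegative functions h ∈ H^1(ℝ) with h(0) = sup h = 1, ∫_ℝ h = 1, and h non-increasing on [0,∞), the function g(x) = (1 - |x|/x₀)² for |x| ≤ x₀ and g(x)=0 otherwise, with x₀ = 3/2, minimizes ∫_ℝ h'² dx; moreover for every h in this class, ∫_ℝ h'² dx ≥ ∫_ℝ g'² dx = 16/9. -/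
/-!
Let `g x = (1 - |x| / x₀) ^ 2` on `[-x₀, x₀]`. Expanding `0 ≤ ∫ (h' - g') ^ 2` gives
`∫ h' ^ 2 ≥ 2 ∫ h' g' - ∫ g' ^ 2`. On each half of `[-x₀, x₀]` the slope `g'` is affine and
vanishes at the outer endpoint, so integration by parts gives
`∫ h' g' = (4 / x₀) h 0 - (2 / x₀ ^ 2) ∫ h`, and `∫_{-x₀}^{x₀} h ≤ 1` because `h ≥ 0` has mass `1`.
With `∫ g' ^ 2 = 8 / (3 x₀)` this yields `∫ h' ^ 2 ≥ 16 / (3 x₀) - 4 / x₀ ^ 2`, whose maximum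
over `x₀` is `16 / 9`, attained at `x₀ = 3 / 2`.
-/

open MeasureTheory Set

theorem integral_mul_add_sq {a b p : ℝ} (hp : p ≠ 0) (q : ℝ) :
    ∫ x in a..b, (p * x + q) ^ 2 = ((p * b + q) ^ 3 - (p * a + q) ^ 3) / (3 * p) := by
  rw [intervalIntegral.integral_comp_mul_add (fun x => x ^ 2) hp, integral_pow, smul_eq_mul]
  field_simp
  norm_num

theorem two_mul_integral_mul_sub_integral_sq_le {f g : ℝ → ℝ} {a b : ℝ} (hab : a ≤ b)
    (hfg : IntervalIntegrable (fun x => f x * g x) volume a b)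
    (hf : IntervalIntegrable (fun x => f x ^ 2) volume a b)
    (hg : IntervalIntegrable (fun x => g x ^ 2) volume a b) :
    2 * (∫ x in a..b, f x * g x) - ∫ x in a..b, g x ^ 2 ≤ ∫ x in a..b, f x ^ 2 := by
  rw [← intervalIntegral.integral_const_mul, ← intervalIntegral.integral_sub (hfg.const_mul 2) hg]
  exact intervalIntegral.integral_mono_on hab ((hfg.const_mul 2).sub hg) hf
    fun x _ => by nlinarith [sq_nonneg (f x - g x)]

theorem integral_deriv_mul_affine {h h' : ℝ → ℝ} {a b : ℝ} (p q : ℝ)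
    (hderiv : ∀ x ∈ uIcc a b, HasDerivAt h (h' x) x) (hint : IntervalIntegrable h' volume a b) :
    ∫ x in a..b, h' x * (p * x + q)
      = h b * (p * b + q) - h a * (p * a + q) - p * ∫ x in a..b, h x := by
  have hcont : ContinuousOn h (uIcc a b) := HasDerivAt.continuousOn hderiv
  have affine : ∀ x ∈ uIcc a b, HasDerivAt (fun x => p * x + q) p x := fun x _ => by
    simpa using ((hasDerivAt_id x).const_mul p).add_const q
  have parts :=
    intervalIntegral.integral_deriv_mul_eq_sub hderiv affine hint intervalIntegrable_const
  rw [intervalIntegral.integral_add (hint.mul_continuousOn (by fun_prop))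
    (hcont.intervalIntegrable.mul_const p), intervalIntegral.integral_mul_const] at parts
  linarith

theorem integral_deriv_sq_ge_of_affine {h h' : ℝ → ℝ} {a b : ℝ} (hab : a ≤ b) (p q : ℝ)
    (hderiv : ∀ x ∈ uIcc a b, HasDerivAt h (h' x) x) (hint : IntervalIntegrable h' volume a b)
    (hsq : IntervalIntegrable (fun x => h' x ^ 2) volume a b) :
    2 * (h b * (p * b + q) - h a * (p * a + q) - p * ∫ x in a..b, h x)
      - ∫ x in a..b, (p * x + q) ^ 2 ≤ ∫ x in a..b, h' x ^ 2 := by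
  rw [← integral_deriv_mul_affine p q hderiv hint]
  exact two_mul_integral_mul_sub_integral_sq_le (g := fun x => p * x + q) hab
    (hint.mul_continuousOn (by fun_prop)) hsq (Continuous.intervalIntegrable (by fun_prop) _ _)

theorem integral_tent_sq {x₀ : ℝ} (hx₀ : 0 < x₀) :
    ∫ x in -x₀..x₀, 4 / x₀ ^ 2 * (1 - |x| / x₀) ^ 2 = 8 / (3 * x₀) := by
  have hp : 2 / x₀ ^ 2 ≠ 0 := by positivity
  have hcont : Continuous fun x : ℝ => 4 / x₀ ^ 2 * (1 - |x| / x₀) ^ 2 := by fun_prop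
  have left : ∫ x in -x₀..0, 4 / x₀ ^ 2 * (1 - |x| / x₀) ^ 2 = 4 / (3 * x₀) := by
    have affine : EqOn (fun x => 4 / x₀ ^ 2 * (1 - |x| / x₀) ^ 2)
        (fun x => (2 / x₀ ^ 2 * x + 2 / x₀) ^ 2) (uIcc (-x₀) 0) := fun x hx => by
      rw [uIcc_of_le (by linarith)] at hx
      simp only [abs_of_nonpos hx.2]
      ring
    rw [intervalIntegral.integral_congr affine, integral_mul_add_sq hp]
    field_simp
    ring
  have right : ∫ x in (0 : ℝ)..x₀, 4 / x₀ ^ 2 * (1 - |x| / x₀) ^ 2 = 4 / (3 * x₀) := by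
    have affine : EqOn (fun x => 4 / x₀ ^ 2 * (1 - |x| / x₀) ^ 2)
        (fun x => (2 / x₀ ^ 2 * x + -(2 / x₀)) ^ 2) (uIcc 0 x₀) := fun x hx => by
      rw [uIcc_of_le hx₀.le] at hx
      simp only [abs_of_nonneg hx.1]
      ring
    rw [intervalIntegral.integral_congr affine, integral_mul_add_sq hp]
    field_simp
    ring
  rw [← intervalIntegral.integral_add_adjacent_intervals (b := 0) (hcont.intervalIntegrable _ _)
    (hcont.intervalIntegrable _ _), left, right]
  ring

theorem integral_deriv_sq_ge_of_tent {h h' : ℝ → ℝ} {x₀ : ℝ} (hx₀ : 0 < x₀)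
    (hderiv : ∀ x ∈ Icc (-x₀) x₀, HasDerivAt h (h' x) x)
    (hint : IntervalIntegrable h' volume (-x₀) x₀)
    (hsq : IntervalIntegrable (fun x => h' x ^ 2) volume (-x₀) x₀) :
    8 / x₀ * h 0 - 4 / x₀ ^ 2 * (∫ x in -x₀..x₀, h x) - 8 / (3 * x₀)
      ≤ ∫ x in -x₀..x₀, h' x ^ 2 := by
  have hp : 2 / x₀ ^ 2 ≠ 0 := by positivity
  have hsub_left : uIcc (-x₀) 0 ⊆ uIcc (-x₀) x₀ := uIcc_subset_uIcc_left (by simp [hx₀.le])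
  have hsub_right : uIcc 0 x₀ ⊆ uIcc (-x₀) x₀ := uIcc_subset_uIcc_right (by simp [hx₀.le])
  have hderiv' : ∀ x ∈ uIcc (-x₀) x₀, HasDerivAt h (h' x) x := by
    rwa [uIcc_of_le (by linarith)]
  have hh : ContinuousOn h (uIcc (-x₀) x₀) := HasDerivAt.continuousOn hderiv'
  have left : 4 / x₀ * h 0 - 4 / x₀ ^ 2 * (∫ x in -x₀..0, h x) - 4 / (3 * x₀)
      ≤ ∫ x in -x₀..0, h' x ^ 2 := by
    convert integral_deriv_sq_ge_of_affine (by linarith) (2 / x₀ ^ 2) (2 / x₀)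
      (fun x hx => hderiv' x (hsub_left hx)) (hint.mono_set hsub_left) (hsq.mono_set hsub_left)
      using 1
    rw [integral_mul_add_sq hp]
    field_simp
    ring
  have right : 4 / x₀ * h 0 - 4 / x₀ ^ 2 * (∫ x in (0 : ℝ)..x₀, h x) - 4 / (3 * x₀)
      ≤ ∫ x in (0 : ℝ)..x₀, h' x ^ 2 := by
    convert integral_deriv_sq_ge_of_affine hx₀.le (2 / x₀ ^ 2) (-(2 / x₀))
      (fun x hx => hderiv' x (hsub_right hx)) (hint.mono_set hsub_right) (hsq.mono_set hsub_right)
      using 1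
    rw [integral_mul_add_sq hp]
    field_simp
    ring
  rw [← intervalIntegral.integral_add_adjacent_intervals (b := 0) (hsq.mono_set hsub_left)
    (hsq.mono_set hsub_right), ← intervalIntegral.integral_add_adjacent_intervals (b := 0)
    (hh.intervalIntegrable.mono_set hsub_left) (hh.intervalIntegrable.mono_set hsub_right)]
  linear_combination left + right

theorem intervalIntegral_le_integral_of_nonneg {f : ℝ → ℝ} {a b : ℝ} (hab : a ≤ b)
    (hf : Integrable f) (hnonneg : ∀ x, 0 ≤ f x) : ∫ x in a..b, f x ≤ ∫ x, f x := by
  rw [intervalIntegral.integral_of_le hab]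
  exact setIntegral_le_integral hf (ae_of_all _ hnonneg)

theorem min_dirichlet_in_class_general
    (h h' : ℝ → ℝ)
    (hderiv : ∀ x, HasDerivAt h (h' x) x)
    (hmem' : MemLp h' 2 (volume : Measure ℝ))
    (hnonneg : ∀ x, 0 ≤ h x)
    (h0 : h 0 = 1)
    (hvol : (∫ x, h x) = 1) :
    (∫ x in (-(3/2 : ℝ))..(3/2 : ℝ),
        (4 / ((3:ℝ)/2) ^ 2) * (1 - |x| / ((3:ℝ)/2)) ^ 2) = 16/9 ∧
    (16 : ℝ)/9 ≤ ∫ x, (h' x) ^ 2 := by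
  refine ⟨by rw [integral_tent_sq (by norm_num)]; norm_num, ?_⟩
  have hmass : ∫ x in -(3/2 : ℝ)..3/2, h x ≤ 1 := hvol ▸ intervalIntegral_le_integral_of_nonneg
    (by norm_num) (.of_integral_ne_zero (by simp [hvol])) hnonneg
  have hsq_le : ∫ x in -(3/2 : ℝ)..3/2, h' x ^ 2 ≤ ∫ x, h' x ^ 2 :=
    intervalIntegral_le_integral_of_nonneg (by norm_num) hmem'.integrable_sq fun x => sq_nonneg _
  have hbound := integral_deriv_sq_ge_of_tent (x₀ := 3/2) (by norm_num) (fun x _ => hderiv x)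
    ((hmem'.locallyIntegrable one_le_two).integrableOn_isCompact isCompact_uIcc).intervalIntegrable
    hmem'.integrable_sq.intervalIntegrable
  rw [h0] at hbound
  linarith

/-- Among all even, nonnegative functions `h ∈ H¹(ℝ)` with `h 0 = sup h = 1`,
`∫ h = 1`, non-increasing on `[0,∞)`, the function
`g x = (1 - |x|/x₀)²` for `|x| ≤ x₀` (with `x₀ = 3/2`), `g = 0` otherwise,
minimizes `∫ h'²`; in particular `∫ h'² ≥ ∫ g'² = 16/9`.
The derivative of `g` on `(-x₀, x₀)` satisfies `g'(x)² = (4/x₀²)(1-|x|/x₀)²`. -/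
theorem min_dirichlet_in_class
    (h h' : ℝ → ℝ)
    (hderiv : ∀ x, HasDerivAt h (h' x) x)
    (hmem' : MemLp h' 2 (volume : Measure ℝ))
    (hnonneg : ∀ x, 0 ≤ h x)
    (heven : ∀ x, h (-x) = h x)
    (h0 : h 0 = 1)
    (hsup : ∀ x, h x ≤ 1)
    (hvol : (∫ x, h x) = 1)
    (hmono : AntitoneOn h (Ici (0:ℝ))) :
    (∫ x in (-(3/2 : ℝ))..(3/2 : ℝ),
        (4 / ((3:ℝ)/2) ^ 2) * (1 - |x| / ((3:ℝ)/2)) ^ 2) = 16/9 ∧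
    (16 : ℝ)/9 ≤ ∫ x, (h' x) ^ 2 :=
  min_dirichlet_in_class_general h h' hderiv hmem' hnonneg h0 hvol
end

section
/- Let L > 0, V > 0, and h_min := (V/L) · χ_{[0,L]}, the minimizer of the total variation ∫_ℝ |h'| among nonnegative BV functions h with ∫_ℝ h = ∫_0^L h = V. Then for every Lipschitz function h ≥ 0 with ∫_ℝ h = ∫_0^L h = V, one has ∫_ℝ |h'| dx − 2V/L ≥ (1/L) ∫_ℝ |h − h_min| dx. -/
open MeasureTheory Set

/-!
Since `∫_ℝ h = ∫_[0,L] h` and `h ≥ 0`, `h` vanishes almost everywhere off `[0, L]`, hence by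
continuity `h 0 = h L = 0`. If `h` attains its maximum `M` on `[0, L]` at `c`, the fundamental
theorem of calculus on `[0, c]` and on `[c, L]` gives `∫ |h'| ≥ 2M`. On the other hand `h - V/L`
has mean zero on `[0, L]`, so `∫ |h - h_min| = 2 ∫_[0,L] (h - V/L)⁺ ≤ 2L (M - V/L)`.
-/

section ContinuousAeEq

variable {X Y : Type*} [TopologicalSpace X] [MeasurableSpace X] [TopologicalSpace Y] [T2Space Y]
  {μ : Measure X} [μ.IsOpenPosMeasure]

theorem Continuous.eqOn_closure_of_ae_restrict_eq {f g : X → Y} {U : Set X} (hU : IsOpen U)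
    (h : f =ᵐ[μ.restrict U] g) (hf : Continuous f) (hg : Continuous g) :
    EqOn f g (closure U) :=
  (μ.eqOn_open_of_ae_eq h hU hf.continuousOn hg.continuousOn).of_subset_closure
    hf.continuousOn hg.continuousOn subset_closure subset_rfl

end ContinuousAeEq

theorem Continuous.eqOn_compl_Ioo_of_ae_restrict_compl_Icc {Y : Type*} [TopologicalSpace Y]
    [T2Space Y] {f g : ℝ → Y} {a b : ℝ} (h : f =ᵐ[volume.restrict (Icc a b)ᶜ] g)
    (hf : Continuous f) (hg : Continuous g) : EqOn f g (Ioo a b)ᶜ := by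
  simpa only [closure_compl, interior_Icc] using
    hf.eqOn_closure_of_ae_restrict_eq isClosed_Icc.isOpen_compl h hg

theorem ae_restrict_compl_eq_zero_of_setIntegral_eq_integral {α : Type*} [MeasurableSpace α]
    {μ : Measure α} {f : α → ℝ} {s : Set α} (hs : MeasurableSet s) (hf : Integrable f μ)
    (hf₀ : 0 ≤ f) (hfs : ∫ x in s, f x ∂μ = ∫ x, f x ∂μ) : f =ᵐ[μ.restrict sᶜ] 0 := by
  have hcompl : ∫ x in sᶜ, f x ∂μ = 0 := by
    linarith [integral_add_compl hs hf]
  exact (integral_eq_zero_iff_of_nonneg_ae (.of_forall hf₀) hf.integrableOn).mp hcompl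

theorem integral_norm_sub_indicator_const {α E : Type*} [MeasurableSpace α]
    [NormedAddCommGroup E] {μ : Measure α} {f : α → E} {s : Set α} {m : E}
    (hs : MeasurableSet s) (hf : f =ᵐ[μ.restrict sᶜ] 0) :
    ∫ x, ‖f x - s.indicator (fun _ => m) x‖ ∂μ = ∫ x in s, ‖f x - m‖ ∂μ := by
  rw [← integral_indicator hs]
  refine integral_congr_ae ?_
  filter_upwards [(ae_restrict_iff' hs.compl).mp hf] with x hx
  by_cases hxs : x ∈ s
  · simp [hxs]
  · simp [hxs, hx hxs]

section FTC

variable {E : Type*} [NormedAddCommGroup E] [NormedSpace ℝ E] [CompleteSpace E] {f f' : ℝ → E}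

theorem norm_sub_le_intervalIntegral_norm_deriv {a b : ℝ} (hab : a ≤ b)
    (hf : ∀ x ∈ uIcc a b, HasDerivAt f (f' x) x) (hf' : IntervalIntegrable f' volume a b) :
    ‖f b - f a‖ ≤ ∫ x in a..b, ‖f' x‖ := by
  rw [← intervalIntegral.integral_eq_sub_of_hasDerivAt hf hf']
  exact intervalIntegral.norm_integral_le_integral_norm hab

theorem two_mul_norm_le_integral_norm_deriv_s3 {a b c : ℝ} (hc : c ∈ Icc a b) (ha : f a = 0)
    (hb : f b = 0) (hf : ∀ x, HasDerivAt f (f' x) x) (hf' : Integrable f') :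
    2 * ‖f c‖ ≤ ∫ x, ‖f' x‖ :=
  calc 2 * ‖f c‖ = ‖f c - f a‖ + ‖f b - f c‖ := by rw [ha, hb, zero_sub, norm_neg, sub_zero]; ring
    _ ≤ (∫ x in a..c, ‖f' x‖) + ∫ x in c..b, ‖f' x‖ :=
      add_le_add (norm_sub_le_intervalIntegral_norm_deriv hc.1 (fun x _ => hf x)
          hf'.intervalIntegrable)
        (norm_sub_le_intervalIntegral_norm_deriv hc.2 (fun x _ => hf x) hf'.intervalIntegrable)
    _ = ∫ x in a..b, ‖f' x‖ := intervalIntegral.integral_add_adjacent_intervals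
      hf'.norm.intervalIntegrable hf'.norm.intervalIntegrable
    _ ≤ ∫ x, ‖f' x‖ := by
      rw [intervalIntegral.integral_of_le (hc.1.trans hc.2)]
      exact setIntegral_le_integral hf'.norm (.of_forall fun _ => norm_nonneg _)

end FTC

theorem setIntegral_abs_sub_le {α : Type*} [MeasurableSpace α] {μ : Measure α} {f : α → ℝ}
    {s : Set α} {m M : ℝ} (hs : MeasurableSet s) (hμs : μ s ≠ ⊤) (hf : IntegrableOn f s μ)
    (hmean : ∫ x in s, f x ∂μ = μ.real s * m) (hM : ∀ x ∈ s, f x ≤ M) :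
    ∫ x in s, |f x - m| ∂μ ≤ 2 * μ.real s * (M - m) := by
  rcases measureReal_nonneg.eq_or_lt with hs₀ | hs₀
  · have : μ.restrict s = 0 := Measure.restrict_eq_zero.2 ((measureReal_eq_zero_iff hμs).1 hs₀.symm)
    simp [this, ← hs₀]
  have hmM : m ≤ M := by
    refine le_of_mul_le_mul_left ?_ hs₀
    calc μ.real s * m = ∫ x in s, f x ∂μ := hmean.symm
      _ ≤ ∫ _ in s, M ∂μ := setIntegral_mono_on hf (integrableOn_const hμs) hs hM
      _ = μ.real s * M := by rw [setIntegral_const, smul_eq_mul]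
  have hfm : IntegrableOn (fun x => f x - m) s μ := hf.sub (integrableOn_const hμs)
  have hpos : IntegrableOn (fun x => max (f x - m) 0) s μ := hfm.pos_part
  have habs : ∫ x in s, |f x - m| ∂μ = 2 * ∫ x in s, max (f x - m) 0 ∂μ := by
    have hzero : ∫ x in s, (f x - m) ∂μ = 0 := by
      rw [integral_sub hf (integrableOn_const hμs), hmean, setIntegral_const, smul_eq_mul,
        sub_self]
    calc ∫ x in s, |f x - m| ∂μ = ∫ x in s, (2 * max (f x - m) 0 - (f x - m)) ∂μ := by
          refine setIntegral_congr_fun hs fun x _ => ?_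
          rcases le_total (f x - m) 0 with hx | hx
          · rw [abs_of_nonpos hx, max_eq_right hx]; ring
          · rw [abs_of_nonneg hx, max_eq_left hx]; ring
      _ = 2 * ∫ x in s, max (f x - m) 0 ∂μ := by
          rw [integral_sub (hpos.const_mul 2) hfm, hzero, sub_zero, integral_const_mul]
  have hbound : ∫ x in s, max (f x - m) 0 ∂μ ≤ μ.real s * (M - m) := by
    rw [← smul_eq_mul, ← setIntegral_const]
    exact setIntegral_mono_on hpos (integrableOn_const hμs) hs
      fun x hx => max_le (by linarith [hM x hx]) (by linarith)
  linarith

theorem quantitative_rectangle_general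
    (L V : ℝ) (hL : 0 < L)
    (h h' : ℝ → ℝ)
    (hderiv : ∀ x, HasDerivAt h (h' x) x)
    (hint' : Integrable h')
    (hnonneg : ∀ x, 0 ≤ h x)
    (hint : Integrable h)
    (hvolR : (∫ x, h x) = V)
    (hvolL : (∫ x in Icc (0:ℝ) L, h x) = V) :
    (∫ x, |h' x|) - 2 * V / L
      ≥ (1 / L) * ∫ x, |h x - Set.indicator (Icc (0:ℝ) L) (fun _ => V / L) x| := by
  have hcont : Continuous h := continuous_iff_continuousAt.2 fun x => (hderiv x).continuousAt
  have hout : h =ᵐ[volume.restrict (Icc 0 L)ᶜ] 0 :=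
    ae_restrict_compl_eq_zero_of_setIntegral_eq_integral measurableSet_Icc hint hnonneg
      (hvolL.trans hvolR.symm)
  have hends : EqOn h 0 (Ioo 0 L)ᶜ :=
    hcont.eqOn_compl_Ioo_of_ae_restrict_compl_Icc hout continuous_const
  obtain ⟨c, hc, hmax⟩ :=
    isCompact_Icc.exists_isMaxOn (nonempty_Icc.2 hL.le) hcont.continuousOn
  have hTV : 2 * h c ≤ ∫ x, |h' x| := by
    simpa only [Real.norm_eq_abs, abs_of_nonneg (hnonneg c)] using
      two_mul_norm_le_integral_norm_deriv_s3 hc (hends (by simp)) (hends (by simp)) hderiv hint'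
  have hvol : volume.real (Icc 0 L) = L := by simp [hL.le]
  have hdist : ∫ x, |h x - (Icc 0 L).indicator (fun _ => V / L) x| ≤ 2 * L * (h c - V / L) := by
    have hmean : ∫ x in Icc 0 L, h x = volume.real (Icc 0 L) * (V / L) := by
      rw [hvol, hvolL]; field_simp
    have hind := integral_norm_sub_indicator_const (m := V / L) measurableSet_Icc hout
    simp only [Real.norm_eq_abs] at hind
    rw [hind]
    simpa only [hvol] using setIntegral_abs_sub_le measurableSet_Icc measure_Icc_lt_top.ne
      hint.integrableOn hmean hmax
  calc (1 / L) * ∫ x, |h x - (Icc 0 L).indicator (fun _ => V / L) x|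
      ≤ (1 / L) * (2 * L * (h c - V / L)) := by gcongr
    _ = 2 * h c - 2 * V / L := by field_simp
    _ ≤ (∫ x, |h' x|) - 2 * V / L := by linarith

/-- **Quantitative stability of the rectangular minimizer (large slope).**
Let `L, V > 0` and `hmin = (V/L)·χ_{[0,L]}`, whose total variation is `2V/L` and
which minimizes the total variation among nonnegative functions with
`∫_ℝ h = ∫_0^L h = V`.  Then for every Lipschitz `h ≥ 0` (with classical
derivative `h'`) satisfying the same constraints,
`∫_ℝ |h'| - 2V/L ≥ (1/L) ∫_ℝ |h - hmin|`. -/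
theorem quantitative_rectangle
    (L V : ℝ) (hL : 0 < L) (hV : 0 < V)
    (h h' : ℝ → ℝ)
    (hlip : ∃ K : NNReal, LipschitzWith K h)
    (hderiv : ∀ x, HasDerivAt h (h' x) x)
    (hint' : Integrable h')
    (hnonneg : ∀ x, 0 ≤ h x)
    (hint : Integrable h)
    (hvolR : (∫ x, h x) = V)
    (hvolL : (∫ x in Icc (0:ℝ) L, h x) = V) :
    (∫ x, |h' x|) - 2 * V / L
      ≥ (1 / L) * ∫ x, |h x - Set.indicator (Icc (0:ℝ) L) (fun _ => V / L) x| :=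
  quantitative_rectangle_general L V hL h h' hderiv hint' hnonneg hint hvolR hvolL
end

section
/- Let f : [a,b] → ℝ be given by f(x) = y₀ + √(r² − (x−x₀)²) (the upper arc of a circle of radius r centered at (x₀,y₀)), with [a,b] contained in (x₀−r, x₀+r). Then ∫_a^b f(x) dx − (b−a)(f(a)+f(b))/2 ≥ (b−a)³/(12 r). -/
/-!
On `(x₀ - r, x₀ + r)` the arc `f x = y₀ + √(r² - (x - x₀)²)` has
`f'' x = -r² / (r² - (x - x₀)²)^(3/2) ≤ -1/r`, so it is `1/r`-strongly concave. A function that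
is `m`-strongly concave on `[a, b]` lies above its chord plus the parabola
`m/2 · (x - a)(b - x)`, and integrating this bound gives the trapezoidal rule with the error term
`m (b - a)³ / 12`.
-/

open intervalIntegral Set

theorem strongConcaveOn_of_hasDerivWithinAt2_le {D : Set ℝ} (hD : Convex ℝ D)
    {f f' f'' : ℝ → ℝ} {m : ℝ} (hf : ContinuousOn f D)
    (hf' : ∀ x ∈ interior D, HasDerivWithinAt f (f' x) (interior D) x)
    (hf'' : ∀ x ∈ interior D, HasDerivWithinAt f' (f'' x) (interior D) x)
    (hf''_le : ∀ x ∈ interior D, f'' x ≤ -m) : StrongConcaveOn D m f := by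
  rw [strongConcaveOn_iff_convex]
  simp only [Real.norm_eq_abs, sq_abs]
  refine concaveOn_of_hasDerivWithinAt2_nonpos hD (f' := fun x ↦ f' x + m * x)
    (f'' := fun x ↦ f'' x + m) (by fun_prop) (fun x hx ↦ ?_) (fun x hx ↦ ?_)
    (fun x hx ↦ by linarith [hf''_le x hx])
  · have hsq := ((hasDerivWithinAt_id x (interior D)).pow 2).const_mul (m / 2)
    exact (hf' x hx).add (hsq.congr_deriv (by simp only [id_eq]; ring))
  · exact (hf'' x hx).add (((hasDerivWithinAt_id x _).const_mul m).congr_deriv (mul_one m))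

theorem StrongConcaveOn.subset {E : Type*} [NormedAddCommGroup E] [NormedSpace ℝ E]
    {s t : Set E} {m : ℝ} {f : E → ℝ} (hf : StrongConcaveOn t m f) (hst : s ⊆ t)
    (hs : Convex ℝ s) : StrongConcaveOn s m f :=
  ⟨hs, fun _ hx _ hy ↦ hf.2 (hst hx) (hst hy)⟩

theorem StrongConcaveOn.chord_add_le {s : Set ℝ} {m : ℝ} {f : ℝ → ℝ}
    (hf : StrongConcaveOn s m f) {a b x : ℝ} (ha : a ∈ s) (hb : b ∈ s) (hab : a < b)
    (hx : x ∈ Icc a b) :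
    ((b - x) * f a + (x - a) * f b) / (b - a) + m / 2 * ((x - a) * (b - x)) ≤ f x := by
  have hba : b - a ≠ 0 := (sub_pos.2 hab).ne'
  have hμ : 0 ≤ (b - x) / (b - a) := div_nonneg (by linarith [hx.2]) (by linarith)
  have hν : 0 ≤ (x - a) / (b - a) := div_nonneg (by linarith [hx.1]) (by linarith)
  have hconc := hf.2 ha hb hμ hν (by field_simp; ring)
  have hx' : ((b - x) / (b - a)) • a + ((x - a) / (b - a)) • b = x := by
    simp only [smul_eq_mul]; field_simp; ring
  rw [hx'] at hconc
  convert hconc using 1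
  simp only [smul_eq_mul, Real.norm_eq_abs, sq_abs]
  field_simp
  ring

theorem integral_chord_add_parabola {a b : ℝ} (hab : a < b) (p q m : ℝ) :
    ∫ x in a..b, (((b - x) * p + (x - a) * q) / (b - a) + m / 2 * ((x - a) * (b - x)))
      = (b - a) * (p + q) / 2 + m * (b - a) ^ 3 / 12 := by
  have hba : b - a ≠ 0 := (sub_pos.2 hab).ne'
  have hpoly : ∀ x, ((b - x) * p + (x - a) * q) / (b - a) + m / 2 * ((x - a) * (b - x))
      = (b * p - a * q) / (b - a) - m / 2 * a * b + ((q - p) / (b - a) + m / 2 * (a + b)) * x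
        - m / 2 * x ^ 2 := fun x ↦ by field_simp; ring
  simp only [hpoly]
  rw [integral_sub, integral_add, integral_const, integral_const_mul, integral_id,
    integral_const_mul, integral_pow, smul_eq_mul]
  · field_simp; ring
  all_goals exact Continuous.intervalIntegrable (by fun_prop) _ _

theorem StrongConcaveOn.trapezoid_add_le_integral {a b m : ℝ} {f : ℝ → ℝ} (hab : a ≤ b)
    (hf : StrongConcaveOn (Icc a b) m f) (hfi : IntervalIntegrable f MeasureTheory.volume a b) :
    (b - a) * (f a + f b) / 2 + m * (b - a) ^ 3 / 12 ≤ ∫ x in a..b, f x := by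
  rcases hab.eq_or_lt with rfl | hab
  · simp
  rw [← integral_chord_add_parabola hab]
  refine integral_mono_on hab.le (Continuous.intervalIntegrable (by fun_prop) _ _) hfi
    fun x hx ↦ hf.chord_add_le (left_mem_Icc.2 hab.le) (right_mem_Icc.2 hab.le) hab hx

theorem hasDerivAt_sqrt_sq_sub_sq {r x₀ x : ℝ} (h : 0 < r ^ 2 - (x - x₀) ^ 2) :
    HasDerivAt (fun x ↦ √(r ^ 2 - (x - x₀) ^ 2))
      ((x₀ - x) / √(r ^ 2 - (x - x₀) ^ 2)) x := by
  have hu : HasDerivAt (fun x ↦ r ^ 2 - (x - x₀) ^ 2) (-(2 * (x - x₀))) x := by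
    simpa using (((hasDerivAt_id x).sub_const x₀).pow 2).const_sub (r ^ 2)
  refine (hu.sqrt h.ne').congr_deriv ?_
  field_simp
  ring

theorem hasDerivAt_div_sqrt_sq_sub_sq {r x₀ x : ℝ} (h : 0 < r ^ 2 - (x - x₀) ^ 2) :
    HasDerivAt (fun x ↦ (x₀ - x) / √(r ^ 2 - (x - x₀) ^ 2))
      (-r ^ 2 / √(r ^ 2 - (x - x₀) ^ 2) ^ 3) x := by
  have hsqrt : √(r ^ 2 - (x - x₀) ^ 2) ≠ 0 := (Real.sqrt_pos.2 h).ne'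
  have hsq : √(r ^ 2 - (x - x₀) ^ 2) ^ 2 = r ^ 2 - (x - x₀) ^ 2 := Real.sq_sqrt h.le
  refine (((hasDerivAt_id' x).const_sub x₀).div (hasDerivAt_sqrt_sq_sub_sq h) hsqrt)
    |>.congr_deriv ?_
  field_simp
  linear_combination -hsq

theorem inv_le_div_sqrt_sq_sub_sq_pow_three {r x₀ x : ℝ} (hr : 0 < r)
    (h : 0 < r ^ 2 - (x - x₀) ^ 2) :
    r⁻¹ ≤ r ^ 2 / √(r ^ 2 - (x - x₀) ^ 2) ^ 3 := by
  have hle : √(r ^ 2 - (x - x₀) ^ 2) ≤ r := Real.sqrt_le_iff.2 ⟨hr.le, by nlinarith⟩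
  have hpos : 0 < √(r ^ 2 - (x - x₀) ^ 2) := Real.sqrt_pos.2 h
  rw [inv_eq_one_div, div_le_div_iff₀ hr (by positivity)]
  nlinarith [pow_le_pow_left₀ hpos.le hle 3]

theorem strongConcaveOn_const_add_sqrt_sq_sub_sq {r : ℝ} (hr : 0 < r) (x₀ y₀ : ℝ) :
    StrongConcaveOn (Ioo (x₀ - r) (x₀ + r)) r⁻¹ (fun x ↦ y₀ + √(r ^ 2 - (x - x₀) ^ 2)) := by
  have hpos : ∀ x ∈ Ioo (x₀ - r) (x₀ + r), 0 < r ^ 2 - (x - x₀) ^ 2 := by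
    rintro x ⟨h₁, h₂⟩
    nlinarith
  refine strongConcaveOn_of_hasDerivWithinAt2_le (convex_Ioo _ _) (by fun_prop)
    (f' := fun x ↦ (x₀ - x) / √(r ^ 2 - (x - x₀) ^ 2))
    (f'' := fun x ↦ -r ^ 2 / √(r ^ 2 - (x - x₀) ^ 2) ^ 3) ?_ ?_ ?_ <;>
    simp only [interior_Ioo] <;> intro x hx
  · exact ((hasDerivAt_sqrt_sq_sub_sq (hpos x hx)).const_add y₀).hasDerivWithinAt
  · exact (hasDerivAt_div_sqrt_sq_sub_sq (hpos x hx)).hasDerivWithinAt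
  · rw [neg_div, neg_le_neg_iff]
    exact inv_le_div_sqrt_sq_sub_sq_pow_three hr (hpos x hx)

/-- **Circular arc versus its chord.**  For `f x = y₀ + √(r² - (x - x₀)²)`
(the upper arc of the circle of radius `r` centered at `(x₀, y₀)`) and
`[a,b] ⊆ (x₀ - r, x₀ + r)`,
`∫_a^b f - (b-a)(f a + f b)/2 ≥ (b-a)³/(12 r)`. -/
theorem arc_above_chord
    (r x₀ y₀ a b : ℝ) (hr : 0 < r) (hab : a < b)
    (ha : |a - x₀| < r) (hb : |b - x₀| < r) :
    (∫ x in a..b, (y₀ + Real.sqrt (r ^ 2 - (x - x₀) ^ 2)))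
        - (b - a) * ((y₀ + Real.sqrt (r ^ 2 - (a - x₀) ^ 2))
            + (y₀ + Real.sqrt (r ^ 2 - (b - x₀) ^ 2))) / 2
      ≥ (b - a) ^ 3 / (12 * r) := by
  obtain ⟨ha₁, ha₂⟩ := abs_lt.1 ha
  obtain ⟨hb₁, hb₂⟩ := abs_lt.1 hb
  have hsub : Icc a b ⊆ Ioo (x₀ - r) (x₀ + r) := Icc_subset_Ioo (by linarith) (by linarith)
  have h := ((strongConcaveOn_const_add_sqrt_sq_sub_sq hr x₀ y₀).subset hsub
    (convex_Icc a b)).trapezoid_add_le_integral hab.le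
    (Continuous.intervalIntegrable (by fun_prop) _ _)
  rw [inv_mul_eq_div, div_div, mul_comm r] at h
  linarith
end
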